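/- Suppose each f_ij is continuously differentiable with ∇f_ij Lipschitz of constant l_ij. For each i ∈ {1,…,N}, let C̄_i = C_i − (1/n_i)1_{n_i}1_{n_i}ᵀ and Ī_i = I_{n_i} − (1/n_i)1_{n_i}1_{n_i}ᵀ for some C_i ∈ ℝ^{n_i×n_i}, and let W_{c_i} be symmetric positive definite with C̄_iᵀ W_{c_i} C̄_i − W_{c_i} = −I_{n_i}. Let Q_i(ξ_i) ∈ ℝ^{n_i²} stack the block-partial gradients (∂f_ij/∂x_i)(ξ_ij) over j = 1,…,n_i, where ξ_i stacks ξ_ij ∈ ℝ^{n_sum}, and let ξ ∈ ℝ^{n_sum²} stack all ξ_ij. Let M ∈ ℝ^{n_sum²×n_sum²}. Suppose sequences ξ(k), e_ξ(k) ∈ ℝ^{n_sum²} and e_{ψ_i}(k) ∈ ℝ^{n_i²} satisfy, for all k: e_{ψ_i}(k+1) = (C̄_i ⊗ I_{n_i}) e_{ψ_i}(k) + (Ī_i ⊗ I_{n_i})(Q_i(ξ_i(k+1)) − Q_i(ξ_i(k))) and ξ(k+1) − ξ(k) = (M − I) e_ξ(k). Let V_ψ(k) = Σ_{i=1}^N e_{ψ_i}(k)ᵀ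 (W_{c_i} ⊗ I_{n_i}) e_{ψ_i}(k) and let e_ψ(k) stack the e_{ψ_i}(k). Then for every k: V_ψ(k+1) − V_ψ(k) ≤ −(1/2)‖e_ψ(k)‖² + 2 max_{i, j} ((2‖C̄_iᵀ W_{c_i} Ī_i‖² + ‖Ī_iᵀ W_{c_i} Ī_i‖) l_ij²) · ‖I − M‖² ‖e_ξ(k)‖². -/

import Mathlib

noncomputable section
open Matrix Kronecker

/-- The collective decision space: coalition `i` has block `ℝ^{n i}`. -/
abbrev Vec (N : ℕ) (n : Fin N → ℕ) := PiLp 2 (fun i : Fin N => EuclideanSpace ℝ (Fin (n i)))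

/-- Agents, indexed by coalition and position within the coalition. -/
abbrev Agent (N : ℕ) (n : Fin N → ℕ) := Σ i : Fin N, Fin (n i)

/-- The stacked estimation vector `ξ ∈ ℝ^{n_sum²}`. -/
abbrev Est (N : ℕ) (n : Fin N → ℕ) := EuclideanSpace ℝ (Agent N n × Agent N n)

/-- The stacked tracking errors `e_ψ = (e_{ψ_1},…,e_{ψ_N})`, with the Euclidean norm. -/
abbrev PsiStack (N : ℕ) (n : Fin N → ℕ) :=
  PiLp 2 (fun i : Fin N => EuclideanSpace ℝ (Fin (n i) × Fin (n i)))

variable {N : ℕ} {n : Fin N → ℕ}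

/-- Agent `a`'s estimate of the collective decision, as an element of the decision space. -/
def toVec (ξ : Est N n) (a : Agent N n) : Vec N n :=
  WithLp.toLp 2 (fun p => WithLp.toLp 2 (fun q => ξ (a, ⟨p, q⟩)))

/-- `Q_i(ξ_i) ∈ ℝ^{n_i²}`: entry `(j, m)` is coordinate `m` (within block `i`) of the
gradient of `f_ij` at agent `ij`'s estimate. -/
def Qfull (f : ∀ i : Fin N, Fin (n i) → Vec N n → ℝ) (i : Fin N) (ξ : Est N n) :
    Fin (n i) × Fin (n i) → ℝ :=
  fun jm => gradient (f i jm.1) (toVec ξ ⟨i, jm.1⟩) i jm.2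

/-- `(1/n)·1 1ᵀ`. -/
def avgMat (m : ℕ) : Matrix (Fin m) (Fin m) ℝ := Matrix.of fun _ _ => 1 / (m : ℝ)

/-- The spectral (L² operator) norm of a real matrix. -/
def specNorm {m p : Type*} [Fintype m] [Fintype p] [DecidableEq p] (A : Matrix m p ℝ) : ℝ :=
  ‖LinearMap.toContinuousLinearMap (Matrix.toEuclideanLin A)‖

/-- Maximum of a real-valued function over a nonempty finite type. -/
def fmax {ι : Type*} [Fintype ι] (h : Nonempty ι) (g : ι → ℝ) : ℝ :=
  Finset.univ.sup' (Finset.univ_nonempty_iff.mpr h) g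

/-! Within coalition `i` the tracking error evolves as `e⁺ = (C̄ ⊗ I) e + (Ī ⊗ I) Δq`. Expanding
the quadratic form of `W ⊗ I`, the Lyapunov identity `C̄ᵀ W C̄ - W = -I` turns the pure `e` part
into `-‖e‖²`; half of it absorbs the cross term (`2ab ≤ a²/2 + 2b²`), leaving
`(2‖C̄ᵀ W Ī‖² + ‖Īᵀ W Ī‖) ‖Δq‖²`, because `G ⊗ I` has spectral norm at most `‖G‖`. Lipschitz
gradients give `‖Δq_i‖² ≤ Σ_j l_ij² ‖ξ_ij(k+1) - ξ_ij(k)‖²`, so summing over the coalitions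
against the largest weight leaves `max · ‖ξ(k+1) - ξ(k)‖² ≤ max · ‖I - M‖² ‖e_ξ(k)‖²`. -/

open scoped Matrix.Norms.L2Operator

section SpectralNorm

variable {ι κ μ : Type*}

theorem specNorm_nonneg [Fintype ι] [Fintype κ] [DecidableEq κ] (A : Matrix ι κ ℝ) :
    0 ≤ specNorm A :=
  norm_nonneg _

theorem specNorm_sub_comm [Fintype ι] [Fintype κ] [DecidableEq κ] (A B : Matrix ι κ ℝ) :
    specNorm (A - B) = specNorm (B - A) :=
  norm_sub_rev A B

theorem norm_mulVec_le_specNorm [Fintype ι] [Fintype κ] [DecidableEq κ] (A : Matrix ι κ ℝ)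
    (x : EuclideanSpace ℝ κ) : ‖WithLp.toLp 2 (A *ᵥ x)‖ ≤ specNorm A * ‖x‖ :=
  A.l2_opNorm_mulVec x

theorem dotProduct_mulVec_le_specNorm [Fintype ι] [Fintype κ] [DecidableEq κ]
    (A : Matrix ι κ ℝ) (x : EuclideanSpace ℝ ι) (y : EuclideanSpace ℝ κ) :
    x ⬝ᵥ A *ᵥ y ≤ specNorm A * ‖x‖ * ‖y‖ :=
  calc x ⬝ᵥ A *ᵥ y = inner ℝ x (WithLp.toLp 2 (A *ᵥ y)) := dotProduct_comm _ _
    _ ≤ ‖x‖ * ‖WithLp.toLp 2 (A *ᵥ y)‖ := real_inner_le_norm _ _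
    _ ≤ ‖x‖ * (specNorm A * ‖y‖) := by gcongr; exact norm_mulVec_le_specNorm A y
    _ = specNorm A * ‖x‖ * ‖y‖ := by ring

end SpectralNorm

section Kronecker

variable {ι κ μ : Type*}

theorem sub_kronecker {α l m n p : Type*} [Ring α] (A₁ A₂ : Matrix l m α) (B : Matrix n p α) :
    (A₁ - A₂) ⊗ₖ B = A₁ ⊗ₖ B - A₂ ⊗ₖ B := by
  ext ⟨i, i'⟩ ⟨j, j'⟩
  simp [sub_mul]

theorem neg_kronecker {α l m n p : Type*} [Ring α] (A : Matrix l m α) (B : Matrix n p α) :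
    (-A) ⊗ₖ B = -(A ⊗ₖ B) := by
  ext ⟨i, i'⟩ ⟨j, j'⟩
  simp

theorem kronecker_one_mulVec_apply [Fintype κ] [Fintype μ] [DecidableEq μ] (G : Matrix ι κ ℝ)
    (x : κ × μ → ℝ) (j : ι) (m : μ) :
    ((G ⊗ₖ (1 : Matrix μ μ ℝ)) *ᵥ x) (j, m) = (G *ᵥ fun j' => x (j', m)) j := by
  simp [mulVec, dotProduct, Fintype.sum_prod_type, one_apply]

theorem specNorm_kronecker_one_le [Fintype ι] [Fintype κ] [Fintype μ] [DecidableEq κ]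
    [DecidableEq μ] (G : Matrix ι κ ℝ) : specNorm (G ⊗ₖ (1 : Matrix μ μ ℝ)) ≤ specNorm G := by
  refine ContinuousLinearMap.opNorm_le_bound _ (norm_nonneg _) fun x => ?_
  -- `G ⊗ I` acts on each column `x (·, m)` separately.
  let col : μ → EuclideanSpace ℝ κ := fun m => WithLp.toLp 2 fun j => x (j, m)
  have hx : ‖x‖ ^ 2 = ∑ m, ‖col m‖ ^ 2 := by
    simp only [EuclideanSpace.real_norm_sq_eq, Fintype.sum_prod_type]
    exact Finset.sum_comm
  have hGx : ‖WithLp.toLp 2 ((G ⊗ₖ (1 : Matrix μ μ ℝ)) *ᵥ x)‖ ^ 2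
      = ∑ m, ‖WithLp.toLp 2 (G *ᵥ col m)‖ ^ 2 := by
    simp only [EuclideanSpace.real_norm_sq_eq, Fintype.sum_prod_type, kronecker_one_mulVec_apply]
    exact Finset.sum_comm
  refine le_of_pow_le_pow_left₀ two_ne_zero (mul_nonneg (norm_nonneg _) (norm_nonneg _)) ?_
  calc _ = ∑ m, ‖WithLp.toLp 2 (G *ᵥ col m)‖ ^ 2 := hGx
    _ ≤ ∑ m, (specNorm G * ‖col m‖) ^ 2 := by
      gcongr with m; exact norm_mulVec_le_specNorm G (col m)
    _ = (specNorm G * ‖x‖) ^ 2 := by simp only [mul_pow, hx, Finset.mul_sum]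

theorem kronecker_one_transpose_mul_mul [Fintype κ] [Fintype μ] [DecidableEq μ]
    (A W B : Matrix κ κ ℝ) :
    (A ⊗ₖ (1 : Matrix μ μ ℝ))ᵀ * (W ⊗ₖ 1) * (B ⊗ₖ 1) = (Aᵀ * W * B) ⊗ₖ (1 : Matrix μ μ ℝ) := by
  rw [← kroneckerMap_transpose, transpose_one, ← mul_kronecker_mul, ← mul_kronecker_mul,
    one_mul, one_mul]

end Kronecker

section QuadraticForm

variable {ι μ : Type*} [Fintype ι]

theorem mulVec_dotProduct_mulVec_mulVec (A W B : Matrix ι ι ℝ) (u v : ι → ℝ) :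
    A *ᵥ u ⬝ᵥ W *ᵥ (B *ᵥ v) = u ⬝ᵥ (Aᵀ * W * B) *ᵥ v := by
  rw [← vecMul_transpose, ← dotProduct_mulVec, mulVec_mulVec, mulVec_mulVec, Matrix.mul_assoc]

theorem quadForm_add_mulVec {A B W : Matrix ι ι ℝ} (hW : Wᵀ = W) (u v : ι → ℝ) :
    (A *ᵥ u + B *ᵥ v) ⬝ᵥ W *ᵥ (A *ᵥ u + B *ᵥ v)
      = u ⬝ᵥ (Aᵀ * W * A) *ᵥ u + 2 * (u ⬝ᵥ (Aᵀ * W * B) *ᵥ v)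
        + v ⬝ᵥ (Bᵀ * W * B) *ᵥ v := by
  have hsymm : B *ᵥ v ⬝ᵥ W *ᵥ (A *ᵥ u) = A *ᵥ u ⬝ᵥ W *ᵥ (B *ᵥ v) := by
    rw [← dotProduct_transpose_mulVec, hW]
  rw [mulVec_add, dotProduct_add, add_dotProduct, add_dotProduct, hsymm,
    mulVec_dotProduct_mulVec_mulVec, mulVec_dotProduct_mulVec_mulVec,
    mulVec_dotProduct_mulVec_mulVec]
  ring

theorem lyapunov_step_le [DecidableEq ι] {A B W : Matrix ι ι ℝ} (hW : Wᵀ = W)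
    (hA : Aᵀ * W * A - W = -1) (e q : EuclideanSpace ℝ ι) :
    (A *ᵥ e + B *ᵥ q) ⬝ᵥ W *ᵥ (A *ᵥ e + B *ᵥ q) - e ⬝ᵥ W *ᵥ e
      ≤ -(1 / 2) * ‖e‖ ^ 2
        + (2 * specNorm (Aᵀ * W * B) ^ 2 + specNorm (Bᵀ * W * B)) * ‖q‖ ^ 2 := by
  have hdecr : e ⬝ᵥ (Aᵀ * W * A) *ᵥ e - e ⬝ᵥ W *ᵥ e = -‖e‖ ^ 2 := by
    rw [← dotProduct_sub, ← sub_mulVec, hA, neg_mulVec, one_mulVec, dotProduct_neg,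
      neg_inj]
    exact real_inner_self_eq_norm_sq e
  have hcross := dotProduct_mulVec_le_specNorm (Aᵀ * W * B) e q
  have hquad := dotProduct_mulVec_le_specNorm (Bᵀ * W * B) q q
  rw [quadForm_add_mulVec hW]
  nlinarith [sq_nonneg (‖e‖ - 2 * specNorm (Aᵀ * W * B) * ‖q‖)]

theorem lyapunov_step_le_kronecker_one [DecidableEq ι] [Fintype μ] [DecidableEq μ]
    {A B W : Matrix ι ι ℝ} (hW : Wᵀ = W) (hA : Aᵀ * W * A - W = -1)
    (e q : EuclideanSpace ℝ (ι × μ)) :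
    ((A ⊗ₖ (1 : Matrix μ μ ℝ)) *ᵥ e + (B ⊗ₖ (1 : Matrix μ μ ℝ)) *ᵥ q)
        ⬝ᵥ (W ⊗ₖ (1 : Matrix μ μ ℝ)) *ᵥ
          ((A ⊗ₖ (1 : Matrix μ μ ℝ)) *ᵥ e + (B ⊗ₖ (1 : Matrix μ μ ℝ)) *ᵥ q)
      - e ⬝ᵥ (W ⊗ₖ (1 : Matrix μ μ ℝ)) *ᵥ e
      ≤ -(1 / 2) * ‖e‖ ^ 2
        + (2 * specNorm (Aᵀ * W * B) ^ 2 + specNorm (Bᵀ * W * B)) * ‖q‖ ^ 2 := by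
  have hWk : (W ⊗ₖ (1 : Matrix μ μ ℝ))ᵀ = W ⊗ₖ 1 := by
    rw [← kroneckerMap_transpose, transpose_one, hW]
  have hAk : (A ⊗ₖ (1 : Matrix μ μ ℝ))ᵀ * (W ⊗ₖ 1) * (A ⊗ₖ 1) - W ⊗ₖ 1 = -1 := by
    rw [kronecker_one_transpose_mul_mul, ← sub_kronecker, hA, neg_kronecker, one_kronecker_one]
  refine (lyapunov_step_le hWk hAk e q).trans ?_
  simp only [kronecker_one_transpose_mul_mul]
  gcongr
  · exact norm_nonneg _
  · exact specNorm_kronecker_one_le _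
  · exact specNorm_kronecker_one_le _

end QuadraticForm

theorem le_fmax {ι : Type*} [Fintype ι] (h : Nonempty ι) (g : ι → ℝ) (a : ι) :
    g a ≤ fmax h g :=
  Finset.le_sup' g (Finset.mem_univ a)

theorem fmax_nonneg {ι : Type*} [Fintype ι] (h : Nonempty ι) {g : ι → ℝ} (hg : ∀ a, 0 ≤ g a) :
    0 ≤ fmax h g :=
  (hg h.some).trans (le_fmax h g h.some)

theorem sum_norm_sq_toVec (ξ : Est N n) : ∑ a, ‖toVec ξ a‖ ^ 2 = ‖ξ‖ ^ 2 := by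
  simp only [PiLp.norm_sq_eq_of_L2, Fintype.sum_prod_type, Fintype.sum_sigma]
  rfl

theorem norm_sq_Qfull_sub_le (f : ∀ i : Fin N, Fin (n i) → Vec N n → ℝ)
    (l : ∀ i : Fin N, Fin (n i) → ℝ)
    (hlip : ∀ i j (a b : Vec N n), ‖gradient (f i j) a - gradient (f i j) b‖ ≤ l i j * ‖a - b‖)
    (i : Fin N) (ξ η : Est N n) :
    ‖WithLp.toLp 2 (Qfull f i ξ - Qfull f i η)‖ ^ 2
      ≤ ∑ j, l i j ^ 2 * ‖toVec (ξ - η) ⟨i, j⟩‖ ^ 2 := by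
  rw [EuclideanSpace.real_norm_sq_eq, Fintype.sum_prod_type]
  gcongr with j
  set g := gradient (f i j) (toVec ξ ⟨i, j⟩) - gradient (f i j) (toVec η ⟨i, j⟩)
  calc ∑ m, (Qfull f i ξ - Qfull f i η) (j, m) ^ 2 = ‖g i‖ ^ 2 :=
        (EuclideanSpace.real_norm_sq_eq (g i)).symm
    _ ≤ ‖g‖ ^ 2 := by gcongr; exact PiLp.norm_apply_le g i
    _ ≤ (l i j * ‖toVec (ξ - η) ⟨i, j⟩‖) ^ 2 := by
        gcongr; exact hlip i j _ _
    _ = l i j ^ 2 * ‖toVec (ξ - η) ⟨i, j⟩‖ ^ 2 := mul_pow _ _ _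

theorem sum_mul_norm_sq_Qfull_sub_le (f : ∀ i : Fin N, Fin (n i) → Vec N n → ℝ)
    (l : ∀ i : Fin N, Fin (n i) → ℝ)
    (hlip : ∀ i j (a b : Vec N n), ‖gradient (f i j) a - gradient (f i j) b‖ ≤ l i j * ‖a - b‖)
    (c : Fin N → ℝ) (hc : ∀ i, 0 ≤ c i) (h : Nonempty (Agent N n)) (ξ η : Est N n) :
    ∑ i, c i * ‖WithLp.toLp 2 (Qfull f i ξ - Qfull f i η)‖ ^ 2
      ≤ fmax h (fun a => c a.1 * l a.1 a.2 ^ 2) * ‖ξ - η‖ ^ 2 := by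
  set F := fmax h (fun a => c a.1 * l a.1 a.2 ^ 2)
  calc ∑ i, c i * ‖WithLp.toLp 2 (Qfull f i ξ - Qfull f i η)‖ ^ 2
      ≤ ∑ i, c i * ∑ j, l i j ^ 2 * ‖toVec (ξ - η) ⟨i, j⟩‖ ^ 2 := by
        gcongr with i
        · exact hc i
        · exact norm_sq_Qfull_sub_le f l hlip i ξ η
    _ = ∑ a : Agent N n, c a.1 * l a.1 a.2 ^ 2 * ‖toVec (ξ - η) a‖ ^ 2 := by
        simp only [Fintype.sum_sigma, Finset.mul_sum, mul_assoc]
    _ ≤ ∑ a : Agent N n, F * ‖toVec (ξ - η) a‖ ^ 2 := by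
        gcongr with a; exact le_fmax h (fun a => c a.1 * l a.1 a.2 ^ 2) a
    _ = F * ‖ξ - η‖ ^ 2 := by rw [← Finset.mul_sum, sum_norm_sq_toVec]

theorem statement7_general (hN : 0 < N) (hn : ∀ i, 0 < n i)
    (f : ∀ i : Fin N, Fin (n i) → Vec N n → ℝ)
    (l : ∀ i : Fin N, Fin (n i) → ℝ)
    (hlip : ∀ i j (a b : Vec N n),
      ‖gradient (f i j) a - gradient (f i j) b‖ ≤ l i j * ‖a - b‖)
    (C Wc : ∀ i : Fin N, Matrix (Fin (n i)) (Fin (n i)) ℝ)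
    (hWc : ∀ i, (Wc i).PosDef)
    (hLyap : ∀ i, (C i - avgMat (n i))ᵀ * Wc i * (C i - avgMat (n i)) - Wc i = -1)
    (M : Matrix (Agent N n × Agent N n) (Agent N n × Agent N n) ℝ)
    (ξ eξ : ℕ → Est N n)
    (eψ : ℕ → PsiStack N n)
    (heψ : ∀ k i, eψ (k + 1) i =
      ((C i - avgMat (n i)) ⊗ₖ (1 : Matrix (Fin (n i)) (Fin (n i)) ℝ)).mulVec (eψ k i)
      + (((1 : Matrix (Fin (n i)) (Fin (n i)) ℝ) - avgMat (n i))
            ⊗ₖ (1 : Matrix (Fin (n i)) (Fin (n i)) ℝ)).mulVec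
          (Qfull f i (ξ (k + 1)) - Qfull f i (ξ k)))
    (hξ : ∀ k, ξ (k + 1) - ξ k = (M - 1).mulVec (eξ k))
    (k : ℕ) :
    (∑ i, eψ (k + 1) i ⬝ᵥ
        ((Wc i ⊗ₖ (1 : Matrix (Fin (n i)) (Fin (n i)) ℝ)).mulVec (eψ (k + 1) i)))
      - (∑ i, eψ k i ⬝ᵥ
        ((Wc i ⊗ₖ (1 : Matrix (Fin (n i)) (Fin (n i)) ℝ)).mulVec (eψ k i)))
    ≤ -(1 / 2) * ‖eψ k‖ ^ 2
      + 2 * fmax (⟨⟨⟨0, hN⟩, ⟨0, hn ⟨0, hN⟩⟩⟩⟩ : Nonempty (Agent N n))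
          (fun a =>
            (2 * specNorm ((C a.1 - avgMat (n a.1))ᵀ * Wc a.1
                  * ((1 : Matrix (Fin (n a.1)) (Fin (n a.1)) ℝ) - avgMat (n a.1))) ^ 2
              + specNorm (((1 : Matrix (Fin (n a.1)) (Fin (n a.1)) ℝ) - avgMat (n a.1))ᵀ
                  * Wc a.1
                  * ((1 : Matrix (Fin (n a.1)) (Fin (n a.1)) ℝ) - avgMat (n a.1))))
              * l a.1 a.2 ^ 2)
          * specNorm ((1 : Matrix (Agent N n × Agent N n) (Agent N n × Agent N n) ℝ) - M) ^ 2
          * ‖eξ k‖ ^ 2 := by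
  have hW : ∀ i, (Wc i)ᵀ = Wc i := fun i => ((hWc i).isHermitian.eq : _)
  set c : Fin N → ℝ := fun i =>
    2 * specNorm ((C i - avgMat (n i))ᵀ * Wc i * (1 - avgMat (n i))) ^ 2
      + specNorm ((1 - avgMat (n i))ᵀ * Wc i * (1 - avgMat (n i)))
  have hc : ∀ i, 0 ≤ c i := fun i => add_nonneg (by positivity) (specNorm_nonneg _)
  have hstep : ∀ i,
      eψ (k + 1) i ⬝ᵥ (Wc i ⊗ₖ (1 : Matrix (Fin (n i)) (Fin (n i)) ℝ)) *ᵥ eψ (k + 1) i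
        - eψ k i ⬝ᵥ (Wc i ⊗ₖ (1 : Matrix (Fin (n i)) (Fin (n i)) ℝ)) *ᵥ eψ k i
      ≤ -(1 / 2) * ‖eψ k i‖ ^ 2
        + c i * ‖WithLp.toLp 2 (Qfull f i (ξ (k + 1)) - Qfull f i (ξ k))‖ ^ 2 := fun i => by
    rw [heψ k i]
    exact lyapunov_step_le_kronecker_one (hW i) (hLyap i) _ (WithLp.toLp 2 _)
  set F := fmax (⟨⟨⟨0, hN⟩, ⟨0, hn ⟨0, hN⟩⟩⟩⟩ : Nonempty (Agent N n))
    (fun a => c a.1 * l a.1 a.2 ^ 2)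
  have hF : 0 ≤ F := fmax_nonneg _ fun a => mul_nonneg (hc a.1) (sq_nonneg _)
  have hξk : ‖ξ (k + 1) - ξ k‖ ≤ specNorm (1 - M) * ‖eξ k‖ :=
    calc ‖ξ (k + 1) - ξ k‖ = ‖WithLp.toLp 2 ((M - 1) *ᵥ eξ k)‖ := by rw [← hξ k]; rfl
      _ ≤ specNorm (M - 1) * ‖eξ k‖ := norm_mulVec_le_specNorm _ _
      _ = specNorm (1 - M) * ‖eξ k‖ := by rw [specNorm_sub_comm]
  rw [← Finset.sum_sub_distrib]
  calc _ ≤ ∑ i, (-(1 / 2) * ‖eψ k i‖ ^ 2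
          + c i * ‖WithLp.toLp 2 (Qfull f i (ξ (k + 1)) - Qfull f i (ξ k))‖ ^ 2) :=
        Finset.sum_le_sum fun i _ => hstep i
    _ = -(1 / 2) * ‖eψ k‖ ^ 2
          + ∑ i, c i * ‖WithLp.toLp 2 (Qfull f i (ξ (k + 1)) - Qfull f i (ξ k))‖ ^ 2 := by
        rw [Finset.sum_add_distrib, ← Finset.mul_sum, PiLp.norm_sq_eq_of_L2]
    _ ≤ -(1 / 2) * ‖eψ k‖ ^ 2 + F * ‖ξ (k + 1) - ξ k‖ ^ 2 := by
        gcongr; exact sum_mul_norm_sq_Qfull_sub_le f l hlip c hc _ _ _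
    _ ≤ -(1 / 2) * ‖eψ k‖ ^ 2 + 2 * F * specNorm (1 - M) ^ 2 * ‖eξ k‖ ^ 2 := by
        have := pow_le_pow_left₀ (norm_nonneg _) hξk 2
        nlinarith [mul_nonneg hF (sq_nonneg (specNorm (1 - M) * ‖eξ k‖))]

/-- Lemma 5 of the paper: decrease of the gradient-tracking Lyapunov
function `V_ψ(k) = Σ_i e_{ψ_i}(k)ᵀ (W_{c_i} ⊗ I) e_{ψ_i}(k)`. -/
theorem statement7 (hN : 0 < N) (hn : ∀ i, 0 < n i)
    (f : ∀ i : Fin N, Fin (n i) → Vec N n → ℝ)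
    (l : ∀ i : Fin N, Fin (n i) → ℝ)
    (hdiff : ∀ i j, ContDiff ℝ 1 (f i j))
    (hlip : ∀ i j (a b : Vec N n),
      ‖gradient (f i j) a - gradient (f i j) b‖ ≤ l i j * ‖a - b‖)
    (C Wc : ∀ i : Fin N, Matrix (Fin (n i)) (Fin (n i)) ℝ)
    (hWc : ∀ i, (Wc i).PosDef)
    (hLyap : ∀ i, (C i - avgMat (n i))ᵀ * Wc i * (C i - avgMat (n i)) - Wc i = -1)
    (M : Matrix (Agent N n × Agent N n) (Agent N n × Agent N n) ℝ)
    (ξ eξ : ℕ → Est N n)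
    (eψ : ℕ → PsiStack N n)
    (heψ : ∀ k i, eψ (k + 1) i =
      ((C i - avgMat (n i)) ⊗ₖ (1 : Matrix (Fin (n i)) (Fin (n i)) ℝ)).mulVec (eψ k i)
      + (((1 : Matrix (Fin (n i)) (Fin (n i)) ℝ) - avgMat (n i))
            ⊗ₖ (1 : Matrix (Fin (n i)) (Fin (n i)) ℝ)).mulVec
          (Qfull f i (ξ (k + 1)) - Qfull f i (ξ k)))
    (hξ : ∀ k, ξ (k + 1) - ξ k = (M - 1).mulVec (eξ k))
    (k : ℕ) :
    (∑ i, eψ (k + 1) i ⬝ᵥ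
        ((Wc i ⊗ₖ (1 : Matrix (Fin (n i)) (Fin (n i)) ℝ)).mulVec (eψ (k + 1) i)))
      - (∑ i, eψ k i ⬝ᵥ
        ((Wc i ⊗ₖ (1 : Matrix (Fin (n i)) (Fin (n i)) ℝ)).mulVec (eψ k i)))
    ≤ -(1 / 2) * ‖eψ k‖ ^ 2
      + 2 * fmax (⟨⟨⟨0, hN⟩, ⟨0, hn ⟨0, hN⟩⟩⟩⟩ : Nonempty (Agent N n))
          (fun a =>
            (2 * specNorm ((C a.1 - avgMat (n a.1))ᵀ * Wc a.1
                  * ((1 : Matrix (Fin (n a.1)) (Fin (n a.1)) ℝ) - avgMat (n a.1))) ^ 2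
              + specNorm (((1 : Matrix (Fin (n a.1)) (Fin (n a.1)) ℝ) - avgMat (n a.1))ᵀ
                  * Wc a.1
                  * ((1 : Matrix (Fin (n a.1)) (Fin (n a.1)) ℝ) - avgMat (n a.1))))
              * l a.1 a.2 ^ 2)
          * specNorm ((1 : Matrix (Agent N n × Agent N n) (Agent N n × Agent N n) ℝ) - M) ^ 2
          * ‖eξ k‖ ^ 2 :=
  statement7_general hN hn f l hlip C Wc hWc hLyap M ξ eξ eψ heψ hξ k
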